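/- (Kullback–Leibler risk difference identity, Lemma 2 of George et al. as used in Proposition 1) Let n, m ≥ 1, v₁, v₂ > 0 and v₀ = v₁v₂/(v₁+v₂). Let π : ℝ^{n×m} → [0,∞] be measurable with 0 < m_π(Z; v) < ∞ for every Z ∈ ℝ^{n×m} and every v > 0, and assume all the integrals below are finite. Then for every M ∈ ℝ^{n×m}, R_KL(M, p̂_I) − R_KL(M, p̂_π) = E_{Z∼N_{n,m}(M, v₀I_n, I_m)}[log m_π(Z; v₀)] − E_{Z∼N_{n,m}(M, v₁I_n, I_m)}[log m_π(Z; v₁)]. -/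

import Mathlib

open MeasureTheory ENNReal

/-- The density of the matrix-variate normal `N_{n,m}(M, v I_n, I_m)` at `X`, where
`ℝ^{n×m}` is identified with `ℝ^{nm}` and `‖·‖` is the (Frobenius) Euclidean norm. -/
noncomputable def pdens (n m : ℕ) (v : ℝ) (X M : EuclideanSpace ℝ (Fin n × Fin m)) : ℝ :=
  (2 * Real.pi * v) ^ (-((n : ℝ) * m) / 2) * Real.exp (-‖X - M‖ ^ 2 / (2 * v))

/-- The marginal `m_π(Z; v) = ∫ p_v(Z|M) π(M) dM` of a prior `π`. -/
noncomputable def marg (n m : ℕ) (π : EuclideanSpace ℝ (Fin n × Fin m) → ℝ≥0∞) (v : ℝ)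
    (Z : EuclideanSpace ℝ (Fin n × Fin m)) : ℝ≥0∞ :=
  ∫⁻ M, ENNReal.ofReal (pdens n m v Z M) * π M

/-- The Bayesian predictive density based on the prior `π`. -/
noncomputable def predPi (n m : ℕ) (π : EuclideanSpace ℝ (Fin n × Fin m) → ℝ≥0∞)
    (v₁ v₂ : ℝ) (Y Yt : EuclideanSpace ℝ (Fin n × Fin m)) : ℝ :=
  (∫⁻ M, ENNReal.ofReal (pdens n m v₂ Yt M * pdens n m v₁ Y M) * π M).toReal /
    (marg n m π v₁ Y).toReal

/-- The predictive density based on the uniform prior: `p̂_I(Ỹ|Y) = p_{v₁+v₂}(Ỹ|Y)`. -/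
noncomputable def predI (n m : ℕ) (v₁ v₂ : ℝ)
    (Y Yt : EuclideanSpace ℝ (Fin n × Fin m)) : ℝ :=
  pdens n m (v₁ + v₂) Yt Y

/-- The Kullback–Leibler risk of a predictive density `p̂(·|·)` at the parameter `M`. -/
noncomputable def RKL (n m : ℕ) (v₁ v₂ : ℝ) (M : EuclideanSpace ℝ (Fin n × Fin m))
    (phat : EuclideanSpace ℝ (Fin n × Fin m) → EuclideanSpace ℝ (Fin n × Fin m) → ℝ) : ℝ :=
  ∫ p : EuclideanSpace ℝ (Fin n × Fin m) × EuclideanSpace ℝ (Fin n × Fin m),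
    pdens n m v₁ p.1 M * pdens n m v₂ p.2 M *
      Real.log (pdens n m v₂ p.2 M / phat p.1 p.2)

/-!
Completing the square in `M` gives `p_{v₁}(Y|M) p_{v₂}(Ỹ|M) = p_{v₁+v₂}(Ỹ|Y) p_{v₀}(W|M)`, where
`W = (v₂ Y + v₁ Ỹ)/(v₁ + v₂)` is the precision-weighted mean. Integrating against `π` gives
`p̂_π(Ỹ|Y) = p̂_I(Ỹ|Y) m_π(W; v₀) / m_π(Y; v₁)`, so the risk difference is the expectation of
`log m_π(W; v₀) - log m_π(Y; v₁)`. The second term only involves `Y ∼ N(M, v₁)`. For the first,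
the shear `(U, D) ↦ (U - cD, U + (1 - c)D)`, `c = v₁/(v₁ + v₂)`, preserves Lebesgue measure, maps
`U` to `W` and `D` to `Ỹ - Y`, and turns the joint density into `p_{v₀}(U|M) p_{v₁+v₂}(D|0)`;
hence `W ∼ N(M, v₀)`.
-/

section Shear

variable {E : Type*} [NormedAddCommGroup E] [NormedSpace ℝ E]

@[simps]
def shearHomeomorph (c : ℝ) : (E × E) ≃ₜ (E × E) where
  toFun p := (p.1 - c • p.2, p.1 + (1 - c) • p.2)
  invFun q := ((1 - c) • q.1 + c • q.2, q.2 - q.1)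
  left_inv p := by ext <;> (simp only; module)
  right_inv q := by ext <;> (simp only; module)
  continuous_toFun := by fun_prop
  continuous_invFun := by fun_prop

variable [MeasurableSpace E] [BorelSpace E] [SecondCountableTopology E]

theorem measurePreserving_shearHomeomorph (μ : Measure E) [SFinite μ] [μ.IsAddRightInvariant]
    (c : ℝ) : MeasurePreserving (shearHomeomorph c) (μ.prod μ) (μ.prod μ) := by
  have hsub : MeasurePreserving (fun p : E × E => (p.1, p.2 - c • p.1)) (μ.prod μ) (μ.prod μ) :=
    (MeasurePreserving.id μ).skew_product (by fun_prop)
      (.of_forall fun a => (measurePreserving_sub_right μ (c • a)).map_eq)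
  have hadd : MeasurePreserving (fun p : E × E => (p.1, p.2 + p.1)) (μ.prod μ) (μ.prod μ) :=
    (MeasurePreserving.id μ).skew_product (by fun_prop)
      (.of_forall fun a => (measurePreserving_add_right μ a).map_eq)
  have hswap : MeasurePreserving (Prod.swap : E × E → E × E) (μ.prod μ) (μ.prod μ) :=
    Measure.measurePreserving_swap
  convert hadd.comp (hswap.comp (hsub.comp hswap)) using 1
  funext p
  refine Prod.ext rfl ?_
  change p.1 + (1 - c) • p.2 = p.2 + (p.1 - c • p.2)
  module

end Shear

noncomputable def precisionWeightedMean {E : Type*} [AddCommGroup E] [Module ℝ E]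
    (v₁ v₂ : ℝ) (Y Yt : E) : E :=
  (v₂ / (v₁ + v₂)) • Y + (v₁ / (v₁ + v₂)) • Yt

theorem precisionWeightedMean_self {E : Type*} [AddCommGroup E] [Module ℝ E] {v₁ v₂ : ℝ}
    (h : v₁ + v₂ ≠ 0) (x : E) : precisionWeightedMean v₁ v₂ x x = x := by
  rw [precisionWeightedMean, ← add_smul, ← add_div, add_comm v₂, div_self h, one_smul]

theorem norm_sq_div_add_norm_sq_div {V : Type*} [NormedAddCommGroup V] [InnerProductSpace ℝ V]
    {v₁ v₂ : ℝ} (hv₁ : v₁ ≠ 0) (hv₂ : v₂ ≠ 0) (hsum : v₁ + v₂ ≠ 0) (a b : V) :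
    ‖a‖ ^ 2 / (2 * v₁) + ‖b‖ ^ 2 / (2 * v₂) =
      ‖b - a‖ ^ 2 / (2 * (v₁ + v₂)) +
        ‖precisionWeightedMean v₁ v₂ a b‖ ^ 2 / (2 * (v₁ * v₂ / (v₁ + v₂))) := by
  rw [precisionWeightedMean, norm_sub_sq_real, real_inner_comm a b, norm_add_sq_real, norm_smul,
    norm_smul, real_inner_smul_left, real_inner_smul_right, mul_pow, mul_pow, Real.norm_eq_abs,
    Real.norm_eq_abs, sq_abs, sq_abs]
  field_simp
  ring

section Gaussian

variable {n m : ℕ}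

local notation "E" => EuclideanSpace ℝ (Fin n × Fin m)

theorem pdens_pos {v : ℝ} (hv : 0 < v) (X M : E) : 0 < pdens n m v X M := by
  unfold pdens; positivity

theorem pdens_eq_pdens_sub_zero (X M : E) {v : ℝ} : pdens n m v X M = pdens n m v (X - M) 0 := by
  rw [pdens, pdens, sub_zero]

theorem integral_pdens {v : ℝ} (hv : 0 < v) (M : E) : ∫ X, pdens n m v X M = 1 := by
  have hgauss : ∀ X : E, pdens n m v X M =
      (2 * Real.pi * v) ^ (-((n : ℝ) * m) / 2) * Real.exp (-(1 / (2 * v)) * ‖X - M‖ ^ 2) :=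
    fun X => by rw [pdens]; ring_nf
  simp_rw [hgauss]
  rw [integral_const_mul,
    integral_sub_right_eq_self (fun X : E => Real.exp (-(1 / (2 * v)) * ‖X‖ ^ 2)),
    GaussianFourier.integral_rexp_neg_mul_sq_norm (by positivity), finrank_euclideanSpace,
    Fintype.card_prod, Fintype.card_fin, Fintype.card_fin,
    show Real.pi / (1 / (2 * v)) = 2 * Real.pi * v by field_simp, ← Real.rpow_add (by positivity)]
  push_cast
  ring_nf
  exact Real.rpow_zero _

theorem integrable_pdens {v : ℝ} (hv : 0 < v) (M : E) : Integrable fun X : E => pdens n m v X M :=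
  .of_integral_ne_zero (by simp [integral_pdens hv])

theorem pdens_mul_pdens {v₁ v₂ : ℝ} (hv₁ : 0 < v₁) (hv₂ : 0 < v₂) (Y Yt M : E) :
    pdens n m v₁ Y M * pdens n m v₂ Yt M =
      pdens n m (v₁ + v₂) Yt Y *
        pdens n m (v₁ * v₂ / (v₁ + v₂)) (precisionWeightedMean v₁ v₂ Y Yt) M := by
  have hsum : 0 < v₁ + v₂ := by positivity
  have hmean : precisionWeightedMean v₁ v₂ Y Yt - M =
      precisionWeightedMean v₁ v₂ (Y - M) (Yt - M) := by
    conv_lhs => rw [← precisionWeightedMean_self hsum.ne' M]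
    unfold precisionWeightedMean; module
  have hexp := norm_sq_div_add_norm_sq_div hv₁.ne' hv₂.ne' hsum.ne' (Y - M) (Yt - M)
  rw [sub_sub_sub_cancel_right, ← hmean] at hexp
  have hconst : (2 * Real.pi * v₁) * (2 * Real.pi * v₂) =
      (2 * Real.pi * (v₁ + v₂)) * (2 * Real.pi * (v₁ * v₂ / (v₁ + v₂))) := by
    field_simp
  simp only [pdens]
  rw [mul_mul_mul_comm, ← Real.mul_rpow (by positivity) (by positivity), hconst,
    Real.mul_rpow (by positivity) (by positivity), mul_mul_mul_comm _ (Real.exp _),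
    ← Real.exp_add, ← Real.exp_add]
  congr 2
  linear_combination -hexp

theorem predPi_eq_predI_mul {v₁ v₂ : ℝ} (hv₁ : 0 < v₁) (hv₂ : 0 < v₂)
    {π : E → ℝ≥0∞} (hπ : Measurable π) (Y Yt : E) :
    predPi n m π v₁ v₂ Y Yt =
      predI n m v₁ v₂ Y Yt *
        (marg n m π (v₁ * v₂ / (v₁ + v₂)) (precisionWeightedMean v₁ v₂ Y Yt)).toReal /
          (marg n m π v₁ Y).toReal := by
  have hI : 0 ≤ predI n m v₁ v₂ Y Yt := (pdens_pos (by positivity) _ _).le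
  have hnum : ∫⁻ M, ENNReal.ofReal (pdens n m v₂ Yt M * pdens n m v₁ Y M) * π M =
      ENNReal.ofReal (predI n m v₁ v₂ Y Yt) *
        marg n m π (v₁ * v₂ / (v₁ + v₂)) (precisionWeightedMean v₁ v₂ Y Yt) := by
    rw [marg, ← lintegral_const_mul _ (by unfold pdens; fun_prop)]
    refine lintegral_congr fun M => ?_
    rw [mul_comm (pdens _ _ _ _ _), pdens_mul_pdens hv₁ hv₂, predI,
      ENNReal.ofReal_mul (pdens_pos (by positivity) _ _).le, mul_assoc]
  rw [predPi, hnum, ENNReal.toReal_mul, ENNReal.toReal_ofReal hI]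

theorem log_div_predI_sub_log_div_predPi {v₁ v₂ : ℝ} (hv₁ : 0 < v₁) (hv₂ : 0 < v₂)
    {π : E → ℝ≥0∞} (hπ : Measurable π) {Y Yt : E}
    (h₀ : 0 < (marg n m π (v₁ * v₂ / (v₁ + v₂)) (precisionWeightedMean v₁ v₂ Y Yt)).toReal)
    (h₁ : 0 < (marg n m π v₁ Y).toReal) (M : E) :
    Real.log (pdens n m v₂ Yt M / predI n m v₁ v₂ Y Yt) -
        Real.log (pdens n m v₂ Yt M / predPi n m π v₁ v₂ Y Yt) =
      Real.log (marg n m π (v₁ * v₂ / (v₁ + v₂)) (precisionWeightedMean v₁ v₂ Y Yt)).toReal -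
        Real.log (marg n m π v₁ Y).toReal := by
  have hp := pdens_pos hv₂ Yt M
  have hI : 0 < predI n m v₁ v₂ Y Yt := pdens_pos (by positivity) _ _
  rw [predPi_eq_predI_mul hv₁ hv₂ hπ, Real.log_div hp.ne' hI.ne',
    Real.log_div hp.ne' (by positivity), Real.log_div (by positivity) h₁.ne',
    Real.log_mul hI.ne' h₀.ne']
  ring

theorem integrable_mul_pdens_snd {f : E → ℝ} (hf : Integrable f) {v : ℝ} (hv : 0 < v) (M : E) :
    Integrable fun p : E × E => f p.1 * pdens n m v p.2 M := by
  rw [Measure.volume_eq_prod]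
  exact hf.mul_prod (integrable_pdens hv M)

theorem integral_mul_pdens_snd (f : E → ℝ) {v : ℝ} (hv : 0 < v) (M : E) :
    ∫ p : E × E, f p.1 * pdens n m v p.2 M = ∫ Z, f Z := by
  rw [Measure.volume_eq_prod, integral_prod_mul f (pdens n m v · M), integral_pdens hv, mul_one]

theorem pdens_mul_pdens_comp_shear {v₁ v₂ : ℝ} (hv₁ : 0 < v₁) (hv₂ : 0 < v₂) (M : E)
    (g : E → ℝ) :
    (fun p : E × E => pdens n m v₁ p.1 M * pdens n m v₂ p.2 M *
        g (precisionWeightedMean v₁ v₂ p.1 p.2)) ∘ shearHomeomorph (v₁ / (v₁ + v₂)) =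
      fun q => pdens n m (v₁ * v₂ / (v₁ + v₂)) q.1 M * g q.1 * pdens n m (v₁ + v₂) q.2 0 := by
  have hsum : 0 < v₁ + v₂ := by positivity
  have hc : 1 - v₁ / (v₁ + v₂) = v₂ / (v₁ + v₂) := by field_simp; ring
  funext ⟨U, D⟩
  have hmean : precisionWeightedMean v₁ v₂ (U - (v₁ / (v₁ + v₂)) • D)
      (U + (v₂ / (v₁ + v₂)) • D) = U := by
    conv_rhs => rw [← precisionWeightedMean_self hsum.ne' U]
    unfold precisionWeightedMean; module
  have hdiff : U + (v₂ / (v₁ + v₂)) • D - (U - (v₁ / (v₁ + v₂)) • D) = D := by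
    rw [← hc]; module
  simp only [Function.comp_apply, shearHomeomorph_apply, hc]
  rw [pdens_mul_pdens hv₁ hv₂, hmean, pdens_eq_pdens_sub_zero (U + _), hdiff]
  ring

theorem integrable_pdens_mul_pdens_comp_precisionWeightedMean {v₁ v₂ : ℝ} (hv₁ : 0 < v₁)
    (hv₂ : 0 < v₂) (M : E) {g : E → ℝ}
    (hg : Integrable fun Z => pdens n m (v₁ * v₂ / (v₁ + v₂)) Z M * g Z) :
    Integrable fun p : E × E => pdens n m v₁ p.1 M * pdens n m v₂ p.2 M *
      g (precisionWeightedMean v₁ v₂ p.1 p.2) := by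
  have hshear := measurePreserving_shearHomeomorph (volume : Measure E) (v₁ / (v₁ + v₂))
  rw [← Measure.volume_eq_prod] at hshear
  rw [← hshear.integrable_comp_emb (shearHomeomorph _).measurableEmbedding,
    pdens_mul_pdens_comp_shear hv₁ hv₂]
  exact integrable_mul_pdens_snd hg (by positivity) 0

theorem integral_pdens_mul_pdens_comp_precisionWeightedMean {v₁ v₂ : ℝ} (hv₁ : 0 < v₁)
    (hv₂ : 0 < v₂) (M : E) (g : E → ℝ) :
    ∫ p : E × E, pdens n m v₁ p.1 M * pdens n m v₂ p.2 M *
        g (precisionWeightedMean v₁ v₂ p.1 p.2) =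
      ∫ Z, pdens n m (v₁ * v₂ / (v₁ + v₂)) Z M * g Z := by
  have hshear := measurePreserving_shearHomeomorph (volume : Measure E) (v₁ / (v₁ + v₂))
  rw [← Measure.volume_eq_prod] at hshear
  rw [← hshear.integral_comp (shearHomeomorph _).measurableEmbedding]
  exact (integral_congr_ae (.of_forall (congrFun (pdens_mul_pdens_comp_shear hv₁ hv₂ M g)))).trans
    (integral_mul_pdens_snd (fun Z => pdens n m (v₁ * v₂ / (v₁ + v₂)) Z M * g Z)
      (by positivity : 0 < v₁ + v₂) 0)

end Gaussian

theorem stmt11_general (n m : ℕ)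
    (v₁ v₂ v₀ : ℝ) (hv₁ : 0 < v₁) (hv₂ : 0 < v₂) (hv₀ : v₀ = v₁ * v₂ / (v₁ + v₂))
    (π : EuclideanSpace ℝ (Fin n × Fin m) → ℝ≥0∞) (hmeas : Measurable π)
    (hmarg : ∀ (Z : EuclideanSpace ℝ (Fin n × Fin m)) (v : ℝ), 0 < v →
      0 < marg n m π v Z ∧ marg n m π v Z ≠ ⊤)
    (M : EuclideanSpace ℝ (Fin n × Fin m))
    (hintI : Integrable (fun p : EuclideanSpace ℝ (Fin n × Fin m) × EuclideanSpace ℝ (Fin n × Fin m) =>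
      pdens n m v₁ p.1 M * pdens n m v₂ p.2 M *
        Real.log (pdens n m v₂ p.2 M / predI n m v₁ v₂ p.1 p.2)))
    (hintπ : Integrable (fun p : EuclideanSpace ℝ (Fin n × Fin m) × EuclideanSpace ℝ (Fin n × Fin m) =>
      pdens n m v₁ p.1 M * pdens n m v₂ p.2 M *
        Real.log (pdens n m v₂ p.2 M / predPi n m π v₁ v₂ p.1 p.2)))
    (hint0 : Integrable (fun Z : EuclideanSpace ℝ (Fin n × Fin m) =>
      pdens n m v₀ Z M * Real.log (marg n m π v₀ Z).toReal))
    (hint1 : Integrable (fun Z : EuclideanSpace ℝ (Fin n × Fin m) =>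
      pdens n m v₁ Z M * Real.log (marg n m π v₁ Z).toReal)) :
    RKL n m v₁ v₂ M (predI n m v₁ v₂) - RKL n m v₁ v₂ M (predPi n m π v₁ v₂) =
      (∫ Z, pdens n m v₀ Z M * Real.log (marg n m π v₀ Z).toReal) -
        ∫ Z, pdens n m v₁ Z M * Real.log (marg n m π v₁ Z).toReal := by
  subst hv₀
  have hmarg_pos : ∀ Z v, 0 < v → 0 < (marg n m π v Z).toReal := fun Z v hv =>
    ENNReal.toReal_pos (hmarg Z v hv).1.ne' (hmarg Z v hv).2
  unfold RKL
  rw [← integral_sub hintI hintπ,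
    ← integral_pdens_mul_pdens_comp_precisionWeightedMean hv₁ hv₂ M
      (fun Z => Real.log (marg n m π (v₁ * v₂ / (v₁ + v₂)) Z).toReal),
    ← integral_mul_pdens_snd (fun Z => pdens n m v₁ Z M * Real.log (marg n m π v₁ Z).toReal) hv₂ M,
    ← integral_sub (integrable_pdens_mul_pdens_comp_precisionWeightedMean hv₁ hv₂ M hint0)
      (integrable_mul_pdens_snd hint1 hv₂ M)]
  refine integral_congr_ae (.of_forall fun p => ?_)
  dsimp only
  rw [← mul_sub, log_div_predI_sub_log_div_predPi hv₁ hv₂ hmeas (hmarg_pos _ _ (by positivity))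
    (hmarg_pos _ _ hv₁)]
  ring

theorem stmt11 (n m : ℕ) (hn : 1 ≤ n) (hm : 1 ≤ m)
    (v₁ v₂ v₀ : ℝ) (hv₁ : 0 < v₁) (hv₂ : 0 < v₂) (hv₀ : v₀ = v₁ * v₂ / (v₁ + v₂))
    (π : EuclideanSpace ℝ (Fin n × Fin m) → ℝ≥0∞) (hmeas : Measurable π)
    (hmarg : ∀ (Z : EuclideanSpace ℝ (Fin n × Fin m)) (v : ℝ), 0 < v →
      0 < marg n m π v Z ∧ marg n m π v Z ≠ ⊤)
    (M : EuclideanSpace ℝ (Fin n × Fin m))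
    (hintI : Integrable (fun p : EuclideanSpace ℝ (Fin n × Fin m) × EuclideanSpace ℝ (Fin n × Fin m) =>
      pdens n m v₁ p.1 M * pdens n m v₂ p.2 M *
        Real.log (pdens n m v₂ p.2 M / predI n m v₁ v₂ p.1 p.2)))
    (hintπ : Integrable (fun p : EuclideanSpace ℝ (Fin n × Fin m) × EuclideanSpace ℝ (Fin n × Fin m) =>
      pdens n m v₁ p.1 M * pdens n m v₂ p.2 M *
        Real.log (pdens n m v₂ p.2 M / predPi n m π v₁ v₂ p.1 p.2)))
    (hint0 : Integrable (fun Z : EuclideanSpace ℝ (Fin n × Fin m) =>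
      pdens n m v₀ Z M * Real.log (marg n m π v₀ Z).toReal))
    (hint1 : Integrable (fun Z : EuclideanSpace ℝ (Fin n × Fin m) =>
      pdens n m v₁ Z M * Real.log (marg n m π v₁ Z).toReal)) :
    RKL n m v₁ v₂ M (predI n m v₁ v₂) - RKL n m v₁ v₂ M (predPi n m π v₁ v₂) =
      (∫ Z, pdens n m v₀ Z M * Real.log (marg n m π v₀ Z).toReal) -
        ∫ Z, pdens n m v₁ Z M * Real.log (marg n m π v₁ Z).toReal :=
  stmt11_general n m v₁ v₂ v₀ hv₁ hv₂ hv₀ π hmeas hmarg M hintI hintπ hint0 hint1
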